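/- arXiv:2004.09921 — 6 statements merged into one kernel-verified Lean document; each statement's English description precedes it below -/
import Mathlib

section
/- For every t ∈ ℝ and every w > f'(t), the set Z = { t̄ > t : f(t) + w(t̄ − t) − (g/2)(t̄ − t)² = f(t̄) } is nonempty and has a minimum; that is, there is a smallest next impact time t̄ > t for the ball leaving the racket at time t with absolute velocity w. -/
/-!
Let `φ s = f t + w (s - t) - (g/2) (s - t)² - f s` be the height of the ball above the racket.
Then `φ t = 0` and `φ' t = w - f' t > 0`, so `φ > 0` on some interval `(t, u]`. A continuous
periodic `f` is bounded below, so the parabola eventually drops below the racket: `φ b < 0`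
for some `b > t`. The zeros of `φ` in `(t, ∞)` are then the zeros in `[u, ∞)`, a closed set,
nonempty by the intermediate value theorem on `[u, b]`, and its infimum is the least impact time.
-/

open Filter Set Topology

lemma eventually_pos_nhdsGT_of_hasDerivAt {φ : ℝ → ℝ} {t d : ℝ} (hφ : HasDerivAt φ d t)
    (hd : 0 < d) (h0 : φ t = 0) : ∀ᶠ s in 𝓝[>] t, 0 < φ s := by
  have hslope := ((hasDerivAt_iff_tendsto_slope.mp hφ).mono_left
    (nhdsGT_le_nhdsNE t)).eventually (eventually_gt_nhds hd)
  filter_upwards [hslope, self_mem_nhdsWithin] with s hs hts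
  exact pos_of_slope_pos hts hs h0

lemma exists_isLeast_zero_of_eventually_pos {φ : ℝ → ℝ} {t b : ℝ} (hφ : Continuous φ)
    (hpos : ∀ᶠ s in 𝓝[>] t, 0 < φ s) (htb : t < b) (hb : φ b < 0) :
    ∃ s, IsLeast {s | t < s ∧ φ s = 0} s := by
  obtain ⟨u, htu, hu⟩ := mem_nhdsGT_iff_exists_Ioc_subset.mp hpos
  have htu : t < u := htu
  have hzeros : {s | t < s ∧ φ s = 0} = Ici u ∩ φ ⁻¹' {0} := by
    ext s
    refine ⟨fun ⟨hts, hs⟩ => ⟨not_lt.mp fun hsu => (hu ⟨hts, hsu.le⟩).ne' hs, hs⟩,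
      fun ⟨hus, hs⟩ => ⟨htu.trans_le hus, hs⟩⟩
  have hub : u ≤ b := not_lt.mp fun hbu => (hu ⟨htb, hbu.le⟩).not_gt hb
  obtain ⟨c, hc, hc0⟩ :=
    intermediate_value_Icc' hub hφ.continuousOn ⟨hb.le, (hu ⟨htu, le_rfl⟩).le⟩
  rw [hzeros]
  exact ⟨_, (isClosed_Ici.inter (isClosed_singleton.preimage hφ)).isLeast_csInf
    ⟨c, hc.1, hc0⟩ (bddBelow_Ici.mono inter_subset_left)⟩

lemma eventually_add_mul_sub_mul_sq_neg (a b : ℝ) {c : ℝ} (hc : 0 < c) :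
    ∀ᶠ x in atTop, a + b * x - c * x ^ 2 < 0 := by
  refine eventually_atTop.mpr ⟨max 1 ((|a| + |b| + 1) / c), fun x hx => ?_⟩
  have hx1 : 1 ≤ x := le_of_max_le_left hx
  have hcx : |a| + |b| + 1 ≤ c * x := by
    rw [← div_le_iff₀' hc]
    exact le_of_max_le_right hx
  have hx0 : 0 ≤ x := zero_le_one.trans hx1
  nlinarith [mul_le_mul_of_nonneg_right hcx hx0, mul_le_mul_of_nonneg_left hx1 (abs_nonneg a),
    mul_le_mul_of_nonneg_right (le_abs_self b) hx0, le_abs_self a]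

/-- For every `t` and every `w > f'(t)`, the set
`Z = { t̄ > t : f(t) + w(t̄ − t) − (g/2)(t̄ − t)² = f(t̄) }` is nonempty and has a
minimum (a smallest next impact time). -/
theorem next_impact_time_exists (g : ℝ) (hg : 0 < g)
    (f : ℝ → ℝ) (hf : ContDiff ℝ 3 f) (hper : ∀ t, f (t + 1) = f t)
    (t w : ℝ) (hw : deriv f t < w) :
    ∃ tb : ℝ,
      IsLeast {s : ℝ | t < s ∧ f t + w * (s - t) - g / 2 * (s - t) ^ 2 = f s} tb := by
  set φ : ℝ → ℝ := fun s => f t + w * (s - t) - g / 2 * (s - t) ^ 2 - f s with hφ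
  simp_rw [← sub_eq_zero (b := f _)]
  have hφ_deriv : HasDerivAt φ (w - deriv f t) t := by
    have hlin : HasDerivAt (fun s : ℝ => s - t) 1 t := (hasDerivAt_id t).sub_const t
    refine ((((hlin.const_mul w).const_add (f t)).fun_sub
      ((hlin.fun_pow 2).const_mul (g / 2))).fun_sub
        (hf.differentiable (by norm_num) t).hasDerivAt).congr_deriv ?_
    ring
  have hf_periodic : Function.Periodic f 1 := hper
  obtain ⟨m, hm⟩ := (hf_periodic.compact_of_continuous one_ne_zero hf.continuous).bddBelow
  obtain ⟨x, hx_neg, hx_pos⟩ := ((eventually_add_mul_sub_mul_sq_neg (f t - m) w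
    (half_pos hg)).and (eventually_gt_atTop 0)).exists
  have hφ_neg : φ (t + x) < 0 := by
    have hm_x := hm ⟨t + x, rfl⟩
    simp only [hφ, add_sub_cancel_left]
    linarith
  exact exists_isLeast_zero_of_eventually_pos (by fun_prop)
    (eventually_pos_nhdsGT_of_hasDerivAt hφ_deriv (sub_pos.mpr hw) (by simp))
    (lt_add_of_pos_right t hx_pos) hφ_neg
end

section
/- There exist v_* > 4‖f'‖ and a map Ψ : {(t, v) ∈ ℝ² : v > v_*} → ℝ², Ψ(t, v) = (t̄(t,v), v̄(t,v)), of class C², injective, with everywhere invertible differential, such that for all (t, v) in its domain: t̄(t,v) > t, Ψ(t+1, v) = Ψ(t, v) + (1, 0), and the bounce equations hold: t̄ = t + (2/g)v − (2/g)f[t,t̄] + (2/g)f'(t) and v̄ = v − 2f[t,t̄] + f'(t̄) + f'(t). -/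
/-!
Write `G(t, s) = g (s - t) / 2 + f[t, s] - f'(t)` and `V(t, s) = g (s - t) / 2 - f[t, s] + f'(s)`:
the first bounce equation says `v = G(t, t̄)` and, given it, the second says `v̄ = V(t, t̄)`.
The partial derivatives of the difference quotient are `(f'(s) - f[t, s]) / (s - t)` and its
mirror image, of size at most `2‖f'‖ / (s - t)`. On the half-plane `s - t ≥ v_* / g` with
`v_* > 4‖f'‖` they are therefore smaller than `g / 2`, so `∂ₛG > 0` and `∂ₜV < 0`; moreover
`G(t, t + v_* / g) ≤ v_*` and `G(t, s) → ∞`. Hence every `v > v_*` is `G(t, t̄)` for exactly one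
`t̄ > t + v_* / g`, and `(t, v) ↦ (t, t̄)` is a local inverse of the shear `(t, s) ↦ (t, G(t, s))`,
so it is `C²` with invertible differential by the inverse function theorem. Composing with
`(t, s) ↦ (s, V(t, s))`, whose differential is invertible because `∂ₜV ≠ 0`, gives `Ψ`. It is
injective because `V(·, t̄)` is strictly decreasing, and it commutes with the unit translation
because `G` and `V` are invariant under `(t, s) ↦ (t + 1, s + 1)`.
-/

open Set Filter Topology Function

noncomputable section

namespace ContinuousLinearMap

variable {𝕜 : Type*} [NontriviallyNormedField 𝕜] {E : Type*} [NormedAddCommGroup E]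
  [NormedSpace 𝕜 E]

def shearEquiv (D : E × 𝕜 →L[𝕜] 𝕜) (h : D (0, 1) ≠ 0) : (E × 𝕜) ≃L[𝕜] E × 𝕜 :=
  (ContinuousLinearEquiv.refl 𝕜 E).skewProd
    (ContinuousLinearEquiv.unitsEquivAut 𝕜 (Units.mk0 _ h)) (D.comp (inl 𝕜 E 𝕜))

theorem coe_shearEquiv (D : E × 𝕜 →L[𝕜] 𝕜) (h : D (0, 1) ≠ 0) :
    (D.shearEquiv h : E × 𝕜 →L[𝕜] E × 𝕜) = (fst 𝕜 E 𝕜).prod D := by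
  refine ext fun ⟨x, y⟩ => Prod.ext rfl ?_
  have hxy : ((x, y) : E × 𝕜) = (x, 0) + y • (0, 1) := by simp
  simp only [shearEquiv, ContinuousLinearEquiv.coe_coe, ContinuousLinearEquiv.skewProd_apply,
    ContinuousLinearEquiv.unitsEquivAut_apply, Units.val_mk0, comp_apply, inl_apply,
    prod_apply, coe_fst']
  rw [hxy, map_add, map_smul, smul_eq_mul, add_comm]

end ContinuousLinearMap

section Shear

variable {𝕜 : Type*} [NontriviallyNormedField 𝕜] {E : Type*} [NormedAddCommGroup E]
  [NormedSpace 𝕜 E] {G : Type*} [NormedAddCommGroup G] [NormedSpace 𝕜 G]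

theorem HasFDerivAt.fst_prodMk_shearEquiv {F : E × 𝕜 → 𝕜} {D : E × 𝕜 →L[𝕜] 𝕜} {x : E × 𝕜}
    (hF : HasFDerivAt F D x) (h : D (0, 1) ≠ 0) :
    HasFDerivAt (fun y => (y.1, F y)) (D.shearEquiv h : E × 𝕜 →L[𝕜] E × 𝕜) x := by
  rw [ContinuousLinearMap.coe_shearEquiv]
  exact hasFDerivAt_fst.prodMk hF

theorem HasFDerivAt.exists_equiv_snd_prodMk {F : 𝕜 × E → 𝕜} {D : 𝕜 × E →L[𝕜] 𝕜} {x : 𝕜 × E}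
    (hF : HasFDerivAt F D x) (h : D (1, 0) ≠ 0) :
    ∃ e : (𝕜 × E) ≃L[𝕜] E × 𝕜, HasFDerivAt (fun y => (y.2, F y)) (e : 𝕜 × E →L[𝕜] E × 𝕜) x := by
  let σ := ContinuousLinearEquiv.prodComm 𝕜 E 𝕜
  have hσ : (D.comp (σ : E × 𝕜 →L[𝕜] 𝕜 × E)) (0, 1) ≠ 0 := by simpa [σ] using h
  refine ⟨σ.symm.trans ((D.comp (σ : E × 𝕜 →L[𝕜] 𝕜 × E)).shearEquiv hσ), ?_⟩
  refine (hasFDerivAt_snd.prodMk hF).congr_fderiv (ContinuousLinearMap.ext fun y => ?_)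
  rw [ContinuousLinearEquiv.coe_coe, ContinuousLinearEquiv.trans_apply,
    ← ContinuousLinearEquiv.coe_coe ((D.comp _).shearEquiv hσ),
    ContinuousLinearMap.coe_shearEquiv]
  simp [σ]

theorem fderiv_apply_zero_one {F : E × 𝕜 → G} {x : E × 𝕜} {c : G}
    (hF : DifferentiableAt 𝕜 F x) (h : HasDerivAt (fun s => F (x.1, s)) c x.2) :
    fderiv 𝕜 F x (0, 1) = c :=
  (hF.hasFDerivAt.comp_hasDerivAt x.2
    ((hasDerivAt_const x.2 x.1).prodMk (hasDerivAt_id x.2))).unique h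

theorem fderiv_apply_one_zero {F : 𝕜 × E → G} {x : 𝕜 × E} {c : G}
    (hF : DifferentiableAt 𝕜 F x) (h : HasDerivAt (fun t => F (t, x.2)) c x.1) :
    fderiv 𝕜 F x (1, 0) = c :=
  (hF.hasFDerivAt.comp_hasDerivAt x.1
    ((hasDerivAt_id x.1).prodMk (hasDerivAt_const x.1 x.2))).unique h

end Shear

theorem ContDiffAt.fst_prodMk_of_leftInverse {𝕜 : Type*} [RCLike 𝕜] {E : Type*}
    [NormedAddCommGroup E] [NormedSpace 𝕜 E] [CompleteSpace E] {F σ : E × 𝕜 → 𝕜} {x : E × 𝕜}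
    {n : WithTop ℕ∞} (hF : ContDiffAt 𝕜 n F x) (hn : n ≠ 0) (h : fderiv 𝕜 F x (0, 1) ≠ 0)
    (hσ : ∀ᶠ y in 𝓝 x, σ (y.1, F y) = y.2) :
    ContDiffAt 𝕜 n (fun q => (q.1, σ q)) (x.1, F x) ∧
      ∃ e : (E × 𝕜) ≃L[𝕜] E × 𝕜,
        HasFDerivAt (fun q => (q.1, σ q)) (e : E × 𝕜 →L[𝕜] E × 𝕜) (x.1, F x) := by
  have hΦ := (hF.differentiableAt hn).hasFDerivAt.fst_prodMk_shearEquiv h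
  have hΦn : ContDiffAt 𝕜 n (fun y => (y.1, F y)) x := contDiffAt_fst.prodMk hF
  have hleft : ∀ᶠ y in 𝓝 x, (fun q => (q.1, σ q)) (y.1, F y) = y :=
    hσ.mono fun y hy => Prod.ext rfl hy
  have hstrict := hΦn.hasStrictFDerivAt' hΦ hn
  exact ⟨(hΦn.to_localInverse hΦ hn).congr_of_eventuallyEq (hstrict.localInverse_unique hleft),
    _, (hstrict.to_local_left_inverse hleft).hasFDerivAt⟩

section Slope

variable {𝕜 : Type*} [NontriviallyNormedField 𝕜] {f : 𝕜 → 𝕜} {t s : 𝕜}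

theorem hasDerivAt_slope_right (hf : DifferentiableAt 𝕜 f s) (hs : s ≠ t) :
    HasDerivAt (slope f t) ((deriv f s - slope f t s) / (s - t)) s := by
  have hst : s - t ≠ 0 := sub_ne_zero.2 hs
  rw [show slope f t = fun x => (f x - f t) / (x - t) from funext (slope_def_field f t)]
  refine ((hf.hasDerivAt.sub_const (f t)).div ((hasDerivAt_id' s).sub_const t) hst).congr_deriv ?_
  field_simp

theorem hasDerivAt_slope_left (hf : DifferentiableAt 𝕜 f t) (ht : t ≠ s) :
    HasDerivAt (fun t => slope f t s) ((deriv f t - slope f t s) / (t - s)) t := by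
  have h := hasDerivAt_slope_right hf ht
  rwa [slope_comm f s t, show slope f s = fun t => slope f t s from funext (slope_comm f s)] at h

theorem Function.Periodic.slope_add {c : 𝕜} (hf : Periodic f c) (t s : 𝕜) :
    slope f (t + c) (s + c) = slope f t s := by
  simp only [slope_def_field, hf t, hf s, add_sub_add_right_eq_sub]

theorem Function.Periodic.deriv {c : 𝕜} (hf : Periodic f c) : Periodic (deriv f) c := fun x => by
  rw [← deriv_comp_add_const, hf.funext]

theorem ContDiff.contDiffAt_slope {n : WithTop ℕ∞} (hf : ContDiff 𝕜 n f) {x : 𝕜 × 𝕜}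
    (hx : x.1 ≠ x.2) : ContDiffAt 𝕜 n (fun y : 𝕜 × 𝕜 => slope f y.1 y.2) x := by
  simp only [slope_def_field]
  exact ((hf.comp contDiff_snd).sub (hf.comp contDiff_fst)).contDiffAt.div
    (contDiff_snd.sub contDiff_fst).contDiffAt (sub_ne_zero.2 hx.symm)

end Slope

theorem abs_slope_le_of_abs_deriv_le {f : ℝ → ℝ} {M : ℝ} (hf : Differentiable ℝ f)
    (hM : ∀ x, |deriv f x| ≤ M) (t s : ℝ) : |slope f t s| ≤ M := by
  rcases eq_or_ne s t with rfl | hst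
  · simpa using (abs_nonneg _).trans (hM s)
  have := Convex.norm_image_sub_le_of_norm_deriv_le (fun x _ => hf x) (fun x _ => hM x)
    convex_univ (mem_univ t) (mem_univ s)
  rw [slope_def_field, abs_div, div_le_iff₀ (abs_pos.2 (sub_ne_zero.2 hst))]
  simpa only [Real.norm_eq_abs] using this

/-- The bounce equations read `v = initialSpeed g f t t̄` and `v̄ = nextSpeed g f t t̄`. -/
def initialSpeed (g : ℝ) (f : ℝ → ℝ) (t s : ℝ) : ℝ := g * (s - t) / 2 + slope f t s - deriv f t

def nextSpeed (g : ℝ) (f : ℝ → ℝ) (t s : ℝ) : ℝ := g * (s - t) / 2 - slope f t s + deriv f s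

/-- The next bounce time `t̄(t, v)`, the solution `s > t + vs / g` of `initialSpeed g f t s = v`;
a junk value unless `v > vs`. -/
def bounceTime (g vs : ℝ) (f : ℝ → ℝ) (p : ℝ × ℝ) : ℝ :=
  invFunOn (initialSpeed g f p.1) (Ioi (p.1 + vs / g)) p.2

def tennisMap (g vs : ℝ) (f : ℝ → ℝ) (p : ℝ × ℝ) : ℝ × ℝ :=
  (bounceTime g vs f p, nextSpeed g f p.1 (bounceTime g vs f p))

section Tennis

variable {g : ℝ} {f : ℝ → ℝ} {M vs t s v : ℝ} {p : ℝ × ℝ} {n : WithTop ℕ∞}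

theorem div_pos_of_abs_deriv_le (hg : 0 < g) (hM : ∀ x, |deriv f x| ≤ M) (hvs : 4 * M < vs) :
    0 < vs / g :=
  div_pos (by linarith [(abs_nonneg _).trans (hM 0)]) hg

theorem initialSpeed_eq_iff (hg : g ≠ 0) :
    initialSpeed g f t s = v ↔ s = t + 2 / g * v - 2 / g * slope f t s + 2 / g * deriv f t := by
  unfold initialSpeed
  constructor <;> intro h
  · rw [← h]
    field_simp
    ring
  · have h' : s - t = 2 / g * (v - slope f t s + deriv f t) := by linarith
    rw [h']
    field_simp
    ring

theorem nextSpeed_eq_of_initialSpeed_eq (h : initialSpeed g f t s = v) :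
    nextSpeed g f t s = v - 2 * slope f t s + deriv f s + deriv f t := by
  rw [← h, initialSpeed, nextSpeed]
  ring

theorem Function.Periodic.initialSpeed_add (hf : Periodic f 1) (t s : ℝ) :
    initialSpeed g f (t + 1) (s + 1) = initialSpeed g f t s := by
  simp only [initialSpeed, hf.slope_add, hf.deriv t, add_sub_add_right_eq_sub]

theorem Function.Periodic.nextSpeed_add (hf : Periodic f 1) (t s : ℝ) :
    nextSpeed g f (t + 1) (s + 1) = nextSpeed g f t s := by
  simp only [nextSpeed, hf.slope_add, hf.deriv s, add_sub_add_right_eq_sub]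

theorem hasDerivAt_initialSpeed_right (hf : Differentiable ℝ f) (hs : s ≠ t) :
    HasDerivAt (initialSpeed g f t) (g / 2 + (deriv f s - slope f t s) / (s - t)) s := by
  have := ((((hasDerivAt_id' s).sub_const t).const_mul g).div_const 2).add
    (hasDerivAt_slope_right (hf s) hs) |>.sub_const (deriv f t)
  exact this.congr_deriv (by ring)

theorem hasDerivAt_nextSpeed_left (hf : Differentiable ℝ f) (ht : t ≠ s) :
    HasDerivAt (fun t => nextSpeed g f t s)
      (-(g / 2) + (deriv f t - slope f t s) / (s - t)) t := by
  have := ((((hasDerivAt_id' t).const_sub s).const_mul g).div_const 2).sub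
    (hasDerivAt_slope_left (hf t) ht) |>.add_const (deriv f s)
  refine this.congr_deriv ?_
  rw [← neg_sub s t, div_neg]
  ring

theorem contDiffAt_initialSpeed (hf : ContDiff ℝ (n + 1) f) {x : ℝ × ℝ} (hx : x.1 ≠ x.2) :
    ContDiffAt ℝ n (fun y : ℝ × ℝ => initialSpeed g f y.1 y.2) x := by
  have hlin : ContDiff ℝ n (fun y : ℝ × ℝ => g * (y.2 - y.1) / 2) := by fun_prop
  exact (hlin.contDiffAt.add ((hf.of_le le_self_add).contDiffAt_slope hx)).sub
    ((contDiff_succ_iff_deriv.1 hf).2.2.comp contDiff_fst).contDiffAt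

theorem contDiffAt_nextSpeed (hf : ContDiff ℝ (n + 1) f) {x : ℝ × ℝ} (hx : x.1 ≠ x.2) :
    ContDiffAt ℝ n (fun y : ℝ × ℝ => nextSpeed g f y.1 y.2) x := by
  have hlin : ContDiff ℝ n (fun y : ℝ × ℝ => g * (y.2 - y.1) / 2) := by fun_prop
  exact (hlin.contDiffAt.sub ((hf.of_le le_self_add).contDiffAt_slope hx)).add
    ((contDiff_succ_iff_deriv.1 hf).2.2.comp contDiff_snd).contDiffAt

theorem abs_initialSpeed_sub_le (hf : Differentiable ℝ f) (hM : ∀ x, |deriv f x| ≤ M)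
    (t s : ℝ) : |initialSpeed g f t s - g * (s - t) / 2| ≤ 2 * M := by
  have h₁ := abs_slope_le_of_abs_deriv_le hf hM t s
  have h₂ := hM t
  rw [initialSpeed, abs_le] at *
  constructor <;> linarith

theorem abs_deriv_sub_slope_div_lt (hg : 0 < g) (hf : Differentiable ℝ f)
    (hM : ∀ x, |deriv f x| ≤ M) (hvs : 4 * M < vs) (hts : vs / g ≤ s - t) (x : ℝ) :
    |(deriv f x - slope f t s) / (s - t)| < g / 2 := by
  have hst : 0 < s - t := (div_pos_of_abs_deriv_le hg hM hvs).trans_le hts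
  rw [abs_div, abs_of_pos hst, div_lt_iff₀ hst]
  calc |deriv f x - slope f t s| ≤ |deriv f x| + |slope f t s| := abs_sub _ _
    _ ≤ 2 * M := by linarith [hM x, abs_slope_le_of_abs_deriv_le hf hM t s]
    _ < g / 2 * (vs / g) := by
      rw [div_mul_div_comm, mul_comm g, mul_div_mul_right _ _ hg.ne']
      linarith
    _ ≤ g / 2 * (s - t) := by gcongr

theorem strictMonoOn_initialSpeed (hg : 0 < g) (hf : Differentiable ℝ f)
    (hM : ∀ x, |deriv f x| ≤ M) (hvs : 4 * M < vs) (t : ℝ) :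
    StrictMonoOn (initialSpeed g f t) (Ici (t + vs / g)) := by
  have hvs₀ := div_pos_of_abs_deriv_le hg hM hvs
  have hderiv : ∀ s ∈ Ici (t + vs / g), HasDerivAt (initialSpeed g f t)
      (g / 2 + (deriv f s - slope f t s) / (s - t)) s := fun s hs =>
    hasDerivAt_initialSpeed_right hf (by simp only [mem_Ici] at hs; linarith)
  refine strictMonoOn_of_hasDerivWithinAt_pos (convex_Ici _)
    (fun s hs => (hderiv s hs).continuousAt.continuousWithinAt)
    (fun s hs => (hderiv s (interior_subset hs)).hasDerivWithinAt) fun s hs => ?_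
  have := abs_lt.1 <| abs_deriv_sub_slope_div_lt (t := t) (s := s) hg hf hM hvs
    (by have := interior_subset hs; simp only [mem_Ici] at this; linarith) s
  linarith [this.1]

theorem strictAntiOn_nextSpeed (hg : 0 < g) (hf : Differentiable ℝ f)
    (hM : ∀ x, |deriv f x| ≤ M) (hvs : 4 * M < vs) (s : ℝ) :
    StrictAntiOn (fun t => nextSpeed g f t s) (Iic (s - vs / g)) := by
  have hvs₀ := div_pos_of_abs_deriv_le hg hM hvs
  have hderiv : ∀ t ∈ Iic (s - vs / g), HasDerivAt (fun t => nextSpeed g f t s)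
      (-(g / 2) + (deriv f t - slope f t s) / (s - t)) t := fun t ht =>
    hasDerivAt_nextSpeed_left hf (by simp only [mem_Iic] at ht; linarith)
  refine strictAntiOn_of_hasDerivWithinAt_neg (convex_Iic _)
    (fun t ht => (hderiv t ht).continuousAt.continuousWithinAt)
    (fun t ht => (hderiv t (interior_subset ht)).hasDerivWithinAt) fun t ht => ?_
  have := abs_lt.1 <| abs_deriv_sub_slope_div_lt (t := t) (s := s) hg hf hM hvs
    (by have := interior_subset ht; simp only [mem_Iic] at this; linarith) t
  linarith [this.2]

theorem exists_initialSpeed_eq (hg : 0 < g) (hf : Differentiable ℝ f)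
    (hM : ∀ x, |deriv f x| ≤ M) (hvs : 4 * M < vs) (hv : vs < v) (t : ℝ) :
    ∃ s ∈ Ioi (t + vs / g), initialSpeed g f t s = v := by
  have hM₀ : 0 ≤ M := (abs_nonneg _).trans (hM 0)
  set a := t + vs / g
  set b := t + 2 * (v + 2 * M) / g
  have hab : a ≤ b := by simp only [a, b]; gcongr; linarith
  have hta : t < a := lt_add_of_pos_right t (div_pos_of_abs_deriv_le hg hM hvs)
  have hcont : ContinuousOn (initialSpeed g f t) (Icc a b) := fun s hs =>
    (hasDerivAt_initialSpeed_right hf (hta.trans_le hs.1).ne').continuousAt.continuousWithinAt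
  have ha : initialSpeed g f t a < v := by
    have h := (abs_le.1 (abs_initialSpeed_sub_le (g := g) hf hM t a)).2
    have : g * (a - t) / 2 = vs / 2 := by simp only [a]; field_simp; ring
    linarith
  have hb : v ≤ initialSpeed g f t b := by
    have h := (abs_le.1 (abs_initialSpeed_sub_le (g := g) hf hM t b)).1
    have : g * (b - t) / 2 = v + 2 * M := by simp only [b]; field_simp; ring
    linarith
  obtain ⟨s, hs, hsv⟩ := intermediate_value_Ioc hab hcont ⟨ha, hb⟩
  exact ⟨s, hs.1, hsv⟩

theorem bounceTime_spec (hg : 0 < g) (hf : Differentiable ℝ f) (hM : ∀ x, |deriv f x| ≤ M)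
    (hvs : 4 * M < vs) (hp : vs < p.2) :
    p.1 + vs / g < bounceTime g vs f p ∧ initialSpeed g f p.1 (bounceTime g vs f p) = p.2 :=
  invFunOn_pos (exists_initialSpeed_eq hg hf hM hvs hp p.1)

theorem bounceTime_initialSpeed (hg : 0 < g) (hf : Differentiable ℝ f)
    (hM : ∀ x, |deriv f x| ≤ M) (hvs : 4 * M < vs) (hs : t + vs / g < s) :
    bounceTime g vs f (t, initialSpeed g f t s) = s :=
  ((strictMonoOn_initialSpeed hg hf hM hvs t).injOn.mono Ioi_subset_Ici_self).leftInvOn_invFunOn hs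

theorem eventually_bounceTime_initialSpeed (hg : 0 < g) (hf : Differentiable ℝ f)
    (hM : ∀ x, |deriv f x| ≤ M) (hvs : 4 * M < vs) {x : ℝ × ℝ} (hx : x.1 + vs / g < x.2) :
    ∀ᶠ y in 𝓝 x, bounceTime g vs f (y.1, initialSpeed g f y.1 y.2) = y.2 :=
  ((isOpen_lt (continuous_fst.add continuous_const) continuous_snd).eventually_mem hx).mono
    fun _ hy => bounceTime_initialSpeed hg hf hM hvs hy

theorem bounceTime_add_one (hper : Periodic f 1) (hg : 0 < g) (hf : Differentiable ℝ f)
    (hM : ∀ x, |deriv f x| ≤ M) (hvs : 4 * M < vs) (hp : vs < p.2) :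
    bounceTime g vs f (p.1 + 1, p.2) = bounceTime g vs f p + 1 := by
  obtain ⟨hlt, heq⟩ := bounceTime_spec hg hf hM hvs hp
  have := bounceTime_initialSpeed (t := p.1 + 1) (s := bounceTime g vs f p + 1) hg hf hM hvs
    (by linarith)
  rwa [hper.initialSpeed_add, heq] at this

theorem tennisMap_add_one (hper : Periodic f 1) (hg : 0 < g) (hf : Differentiable ℝ f)
    (hM : ∀ x, |deriv f x| ≤ M) (hvs : 4 * M < vs) (hp : vs < p.2) :
    tennisMap g vs f (p.1 + 1, p.2) = ((tennisMap g vs f p).1 + 1, (tennisMap g vs f p).2) := by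
  simp only [tennisMap, bounceTime_add_one hper hg hf hM hvs hp, hper.nextSpeed_add]

theorem injOn_tennisMap (hg : 0 < g) (hf : Differentiable ℝ f) (hM : ∀ x, |deriv f x| ≤ M)
    (hvs : 4 * M < vs) : InjOn (tennisMap g vs f) {p | vs < p.2} := by
  intro p hp q hq hpq
  obtain ⟨hp₁, hp₂⟩ := bounceTime_spec hg hf hM hvs hp
  obtain ⟨hq₁, hq₂⟩ := bounceTime_spec hg hf hM hvs hq
  obtain ⟨hs, hV⟩ := Prod.mk.inj hpq
  rw [← hs] at hq₁ hq₂ hV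
  have ht : p.1 = q.1 := (strictAntiOn_nextSpeed hg hf hM hvs _).injOn
    (show p.1 ≤ _ by linarith) (show q.1 ≤ _ by linarith) hV
  exact Prod.ext ht (by rw [← hp₂, ← hq₂, ht])

theorem contDiffAt_prodMk_bounceTime (hg : 0 < g) (hn : n ≠ 0) (hf : ContDiff ℝ (n + 1) f)
    (hM : ∀ x, |deriv f x| ≤ M) (hvs : 4 * M < vs) (hp : vs < p.2) :
    ContDiffAt ℝ n (fun q => (q.1, bounceTime g vs f q)) p ∧
      ∃ e : (ℝ × ℝ) ≃L[ℝ] ℝ × ℝ,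
        HasFDerivAt (fun q => (q.1, bounceTime g vs f q)) (e : ℝ × ℝ →L[ℝ] ℝ × ℝ) p := by
  have hf₁ : Differentiable ℝ f := (contDiff_succ_iff_deriv.1 hf).1
  obtain ⟨hlt, heq⟩ := bounceTime_spec hg hf₁ hM hvs hp
  set x : ℝ × ℝ := (p.1, bounceTime g vs f p)
  have hx : x.1 ≠ x.2 := by linarith [div_pos_of_abs_deriv_le hg hM hvs]
  have hG : ContDiffAt ℝ n (fun y : ℝ × ℝ => initialSpeed g f y.1 y.2) x :=
    contDiffAt_initialSpeed hf hx
  have hGs : fderiv ℝ (fun y : ℝ × ℝ => initialSpeed g f y.1 y.2) x (0, 1) ≠ 0 := by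
    rw [fderiv_apply_zero_one (hG.differentiableAt hn) (hasDerivAt_initialSpeed_right hf₁ hx.symm)]
    have := abs_lt.1 (abs_deriv_sub_slope_div_lt hg hf₁ hM hvs (s := x.2) (t := x.1)
      (by simp only [x]; linarith) x.2)
    linarith
  rw [show p = (x.1, initialSpeed g f x.1 x.2) from Prod.ext rfl heq.symm]
  exact hG.fst_prodMk_of_leftInverse hn hGs (eventually_bounceTime_initialSpeed hg hf₁ hM hvs hlt)

theorem contDiffAt_prodMk_nextSpeed (hg : 0 < g) (hn : n ≠ 0) (hf : ContDiff ℝ (n + 1) f)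
    (hM : ∀ x, |deriv f x| ≤ M) (hvs : 4 * M < vs) {x : ℝ × ℝ} (hx : x.1 + vs / g < x.2) :
    ContDiffAt ℝ n (fun y : ℝ × ℝ => (y.2, nextSpeed g f y.1 y.2)) x ∧
      ∃ e : (ℝ × ℝ) ≃L[ℝ] ℝ × ℝ,
        HasFDerivAt (fun y : ℝ × ℝ => (y.2, nextSpeed g f y.1 y.2)) (e : ℝ × ℝ →L[ℝ] ℝ × ℝ) x := by
  have hf₁ : Differentiable ℝ f := (contDiff_succ_iff_deriv.1 hf).1
  have hx' : x.1 ≠ x.2 := by linarith [div_pos_of_abs_deriv_le hg hM hvs]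
  have hV : ContDiffAt ℝ n (fun y : ℝ × ℝ => nextSpeed g f y.1 y.2) x :=
    contDiffAt_nextSpeed hf hx'
  refine ⟨contDiffAt_snd.prodMk hV,
    (hV.differentiableAt hn).hasFDerivAt.exists_equiv_snd_prodMk ?_⟩
  rw [fderiv_apply_one_zero (hV.differentiableAt hn) (hasDerivAt_nextSpeed_left hf₁ hx')]
  have := abs_lt.1 (abs_deriv_sub_slope_div_lt hg hf₁ hM hvs (s := x.2) (t := x.1)
    (by linarith) x.1)
  linarith

theorem contDiffAt_tennisMap (hg : 0 < g) (hn : n ≠ 0) (hf : ContDiff ℝ (n + 1) f)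
    (hM : ∀ x, |deriv f x| ≤ M) (hvs : 4 * M < vs) (hp : vs < p.2) :
    ContDiffAt ℝ n (tennisMap g vs f) p ∧ (fderiv ℝ (tennisMap g vs f) p).det ≠ 0 := by
  have hf₁ : Differentiable ℝ f := (contDiff_succ_iff_deriv.1 hf).1
  obtain ⟨hΦ, e₁, he₁⟩ := contDiffAt_prodMk_bounceTime hg hn hf hM hvs hp
  obtain ⟨hH, e₂, he₂⟩ := contDiffAt_prodMk_nextSpeed hg hn hf hM hvs
    (x := (p.1, bounceTime g vs f p)) (bounceTime_spec hg hf₁ hM hvs hp).1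
  have hcomp : tennisMap g vs f = (fun y : ℝ × ℝ => (y.2, nextSpeed g f y.1 y.2)) ∘
      (fun q => (q.1, bounceTime g vs f q)) := rfl
  rw [hcomp]
  refine ⟨hH.comp p hΦ, ?_⟩
  rw [(he₂.comp p he₁).fderiv, ContinuousLinearEquiv.comp_coe]
  exact (LinearEquiv.isUnit_det' (e₁.trans e₂).toLinearEquiv).ne_zero

end Tennis

/-- there exists `v_* > 4‖f'‖` such that the tennis map
`Ψ(t,v) = (t̄, v̄)` is well defined on `{v > v_*}`, of class `C²`, injective,
with everywhere invertible differential, satisfies `t̄ > t`, commutes with the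
unit translation in `t`, and obeys the bounce equations. -/
theorem tennis_map_well_defined (g : ℝ) (hg : 0 < g)
    (f : ℝ → ℝ) (hf : ContDiff ℝ 3 f) (hper : ∀ t, f (t + 1) = f t) :
    ∃ vs : ℝ, vs > 4 * sSup (Set.range fun s => |deriv f s|) ∧
    ∃ Ψ : ℝ × ℝ → ℝ × ℝ,
      ContDiffOn ℝ 2 Ψ {p : ℝ × ℝ | vs < p.2} ∧
      Set.InjOn Ψ {p : ℝ × ℝ | vs < p.2} ∧
      (∀ p : ℝ × ℝ, vs < p.2 → (fderiv ℝ Ψ p).det ≠ 0) ∧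
      (∀ p : ℝ × ℝ, vs < p.2 →
        p.1 < (Ψ p).1 ∧
        Ψ (p.1 + 1, p.2) = ((Ψ p).1 + 1, (Ψ p).2) ∧
        (Ψ p).1 = p.1 + 2 / g * p.2
            - 2 / g * ((f (Ψ p).1 - f p.1) / ((Ψ p).1 - p.1))
            + 2 / g * deriv f p.1 ∧
        (Ψ p).2 = p.2 - 2 * ((f (Ψ p).1 - f p.1) / ((Ψ p).1 - p.1))
            + deriv f (Ψ p).1 + deriv f p.1) := by
  set M := sSup (Set.range fun s => |deriv f s|)
  have hper' : Periodic f 1 := hper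
  have hf₁ : Differentiable ℝ f := hf.differentiable (by norm_num)
  have hM : ∀ x, |deriv f x| ≤ M := fun x =>
    le_csSup ((hper'.deriv.comp abs).compact_of_continuous one_ne_zero
      (hf.continuous_deriv (by norm_num)).abs).bddAbove ⟨x, rfl⟩
  have hvs : 4 * M < 4 * M + 1 := lt_add_one _
  have hsmooth := fun (p : ℝ × ℝ) (hp : 4 * M + 1 < p.2) =>
    contDiffAt_tennisMap (n := 2) hg two_ne_zero hf hM hvs hp
  refine ⟨4 * M + 1, hvs, tennisMap g (4 * M + 1) f,
    fun p hp => (hsmooth p hp).1.contDiffWithinAt, injOn_tennisMap hg hf₁ hM hvs,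
    fun p hp => (hsmooth p hp).2, fun p hp => ?_⟩
  obtain ⟨hlt, heq⟩ := bounceTime_spec hg hf₁ hM hvs hp
  simp only [← slope_def_field]
  exact ⟨(lt_add_of_pos_right _ (div_pos_of_abs_deriv_le hg hM hvs)).trans hlt,
    tennisMap_add_one hper' hg hf₁ hM hvs hp, (initialSpeed_eq_iff hg.ne').1 heq,
    nextSpeed_eq_of_initialSpeed_eq heq⟩
end
end

section
/- Let S : ℝ² → ℝ² be a C² map, injective, with everywhere invertible differential, satisfying S(x+1, y) = S(x, y) + (1, 0). Let P : ℝ → ℝ be Lipschitz with P(x+1) = P(x) whose graph Γ = {(x, P(x)) : x ∈ ℝ} satisfies S(Γ) = Γ. Define φ(x) = π₁(S(x, P(x))), where π₁ is the projection onto the first coordinate. Then φ is an increasing bi-Lipschitz homeomorphism of ℝ with φ(x+1) = φ(x) + 1, S(x, P(x)) = (φ(x), P(φ(x))) for all x ∈ ℝ, and for all x ≠ x_* the difference quotient (φ(x) − φ(x_*))/(x − x_*) lies between the positive constants essinf φ' and esssup φ'. -/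
open MeasureTheory

/-- Glue local relations along chains, using integer translation invariance. -/
lemma glue_rel (R : ℝ → ℝ → Prop) (δ : ℝ) (hδ : 0 < δ)
    (htrans : ∀ x y z : ℝ, R x y → R y z → R x z)
    (hrefl : ∀ x, R x x)
    (hshift : ∀ (n : ℤ) (x y : ℝ), R x y → R (x + n) (y + n))
    (hloc : ∀ x y : ℝ, x ∈ Set.Ico (0:ℝ) 1 → x ≤ y → y ≤ x + δ → R x y) :
    ∀ x y : ℝ, x ≤ y → R x y := by
  have hloc' : ∀ x y : ℝ, x ≤ y → y ≤ x + δ → R x y := by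
    intro x y hxy hyd
    have h0 : (x - ⌊x⌋ : ℝ) ∈ Set.Ico (0:ℝ) 1 :=
      ⟨by linarith [Int.floor_le x], by linarith [Int.lt_floor_add_one x]⟩
    have h1 := hloc (x - ⌊x⌋) (y - ⌊x⌋) h0 (by linarith) (by linarith)
    have h2 := hshift ⌊x⌋ _ _ h1
    simpa using h2
  have key : ∀ n : ℕ, ∀ x y : ℝ, x ≤ y → y ≤ x + n * δ → R x y := by
    intro n
    induction n with
    | zero =>
      intro x y h1 h2
      have : y = x := le_antisymm (by simpa using h2) h1
      subst this; exact hrefl y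
    | succ n ih =>
      intro x y h1 h2
      by_cases hc : y ≤ x + δ
      · exact hloc' x y h1 hc
      · push_neg at hc
        have h3 : x ≤ y - δ := by linarith
        refine htrans x (y - δ) y (ih x (y - δ) h3 ?_) (hloc' (y - δ) y (by linarith) (by linarith))
        push_cast at h2 ⊢
        linarith
  intro x y hxy
  obtain ⟨n, hn⟩ := exists_nat_ge ((y - x) / δ)
  refine key n x y hxy ?_
  rw [div_le_iff₀ hδ] at hn
  linarith

/-- Uniformize a local estimate over the unit interval by compactness. -/
lemma unif_rel (Q : ℝ → ℝ → ℝ → Prop)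
    (hmonoQ : ∀ c c' x y : ℝ, c ≤ c' → Q c x y → Q c' x y)
    (hloc : ∀ x0 : ℝ, ∃ ε > 0, ∃ c : ℝ, ∀ x ∈ Metric.ball x0 ε, ∀ y ∈ Metric.ball x0 ε, Q c x y) :
    ∃ δ > 0, ∃ c : ℝ, ∀ x ∈ Set.Ico (0:ℝ) 1, ∀ y : ℝ, x ≤ y → y ≤ x + δ → Q c x y := by
  choose ε hε c hQ using hloc
  have hcover : Set.Icc (0:ℝ) 1 ⊆ ⋃ i : ℝ, Metric.ball i (ε i / 2) := by
    intro x _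
    exact Set.mem_iUnion.2 ⟨x, Metric.mem_ball_self (half_pos (hε x))⟩
  obtain ⟨t, ht⟩ := isCompact_Icc.elim_finite_subcover
    (fun i : ℝ => Metric.ball i (ε i / 2)) (fun i => Metric.isOpen_ball) hcover
  have hne : t.Nonempty := by
    have h0 := ht (Set.mem_Icc.2 ⟨le_rfl, zero_le_one⟩)
    obtain ⟨i, hit, -⟩ := Set.mem_iUnion₂.1 h0
    exact ⟨i, hit⟩
  refine ⟨t.inf' hne (fun i => ε i / 2), ?_, t.sup' hne c, ?_⟩
  · rw [gt_iff_lt, Finset.lt_inf'_iff]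
    exact fun i _ => half_pos (hε i)
  · intro x hx y hxy hyd
    obtain ⟨i, hit, hxi⟩ := Set.mem_iUnion₂.1 (ht ⟨hx.1, hx.2.le⟩)
    have hδi : t.inf' hne (fun i => ε i / 2) ≤ ε i / 2 := Finset.inf'_le _ hit
    rw [Metric.mem_ball, Real.dist_eq] at hxi
    have hyi : y ∈ Metric.ball i (ε i) := by
      rw [Metric.mem_ball, Real.dist_eq]
      have h1 : |y - x| ≤ ε i / 2 := by
        rw [abs_of_nonneg (by linarith)]; linarith
      calc |y - i| ≤ |y - x| + |x - i| := by
            have := abs_add_le (y - x) (x - i); simpa [sub_add_sub_cancel] using this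
        _ < ε i := by linarith
    have hxi' : x ∈ Metric.ball i (ε i) := by
      rw [Metric.mem_ball, Real.dist_eq]; linarith [half_le_self (hε i).le]
    exact hmonoQ _ _ _ _ (Finset.le_sup' c hit) (hQ i x hxi' y hyi)

open MeasureTheory

/-- Local bi-Lipschitz estimate for `x ↦ S (x, P x)` near any point. -/
lemma local_biest (S : ℝ × ℝ → ℝ × ℝ) (hS : ContDiff ℝ 2 S)
    (hdet : ∀ p : ℝ × ℝ, (fderiv ℝ S p).det ≠ 0)
    (P : ℝ → ℝ) (K : NNReal) (hP : LipschitzWith K P) (x0 : ℝ) :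
    ∃ ε > 0, ∃ c : ℝ, ∀ x ∈ Metric.ball x0 ε, ∀ y ∈ Metric.ball x0 ε,
      0 ≤ c ∧ dist (S (y, P y)) (S (x, P x)) ≤ c * dist y x ∧
      dist y x ≤ c * dist (S (y, P y)) (S (x, P x)) := by
  classical
  set p0 : ℝ × ℝ := (x0, P x0) with hp0
  have hstrict : HasStrictFDerivAt S (fderiv ℝ S p0) p0 :=
    hS.contDiffAt.hasStrictFDerivAt (by norm_num)
  -- build the continuous linear equivalence
  have hdet0 : LinearMap.det ((fderiv ℝ S p0 : (ℝ × ℝ) →L[ℝ] (ℝ × ℝ)) :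
      (ℝ × ℝ) →ₗ[ℝ] (ℝ × ℝ)) ≠ 0 := hdet p0
  set e : (ℝ × ℝ) ≃ₗ[ℝ] (ℝ × ℝ) := LinearMap.equivOfDetNeZero _ hdet0 with he
  set A : (ℝ × ℝ) ≃L[ℝ] (ℝ × ℝ) := e.toContinuousLinearEquiv with hA
  have hcoe : (A : (ℝ × ℝ) →L[ℝ] (ℝ × ℝ)) = fderiv ℝ S p0 := by
    apply ContinuousLinearMap.ext
    intro v
    show A v = fderiv ℝ S p0 v
    rw [hA, LinearEquiv.coe_toContinuousLinearEquiv', he, LinearMap.equivOfDetNeZero,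
      LinearEquiv.ofIsUnitDet_apply]
    rfl
  have hstrict' : HasStrictFDerivAt S (A : (ℝ × ℝ) →L[ℝ] (ℝ × ℝ)) p0 := by
    rw [hcoe]; exact hstrict
  set N : NNReal := ‖(A.symm : (ℝ × ℝ) →L[ℝ] (ℝ × ℝ))‖₊ with hN
  have hNne : N ≠ 0 := by
    intro h0
    have h1 : (A.symm : (ℝ × ℝ) →L[ℝ] (ℝ × ℝ)) = 0 := by
      apply norm_eq_zero.1
      rw [← coe_nnnorm, ← hN, h0, NNReal.coe_zero]
    have h2 : A.symm (A ((1:ℝ), (0:ℝ))) = ((1:ℝ), (0:ℝ)) := A.symm_apply_apply _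
    rw [show A.symm (A ((1:ℝ),(0:ℝ))) = (A.symm : (ℝ × ℝ) →L[ℝ] (ℝ × ℝ)) (A ((1:ℝ),(0:ℝ))) from rfl,
      h1] at h2
    simpa using congrArg Prod.fst h2
  have hcpos : (0 : NNReal) < N⁻¹ / 2 := by positivity
  obtain ⟨s, hs_nhds, happ⟩ := hstrict'.approximates_deriv_on_nhds (f' := (A : (ℝ × ℝ) →L[ℝ] (ℝ × ℝ)))
    (Or.inr hcpos)
  have hclt : N⁻¹ / 2 < N⁻¹ := NNReal.half_lt_self (by simpa using hNne)
  have hanti := happ.antilipschitz (Or.inr hclt)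
  obtain ⟨k, t, ht_nhds, hlipS⟩ := (hS.contDiffAt.of_le (by norm_num)).exists_lipschitzOnWith
  set G : ℝ → ℝ × ℝ := fun x => (x, P x) with hG
  have hGcont : Continuous G := continuous_id.prodMk hP.continuous
  have hGx0 : G x0 = p0 := rfl
  have hw : s ∩ t ∈ nhds p0 := Filter.inter_mem hs_nhds ht_nhds
  have hV : G ⁻¹' (s ∩ t) ∈ nhds x0 := hGcont.continuousAt.preimage_mem_nhds (hGx0 ▸ hw)
  obtain ⟨ε, hε, hball⟩ := Metric.mem_nhds_iff.1 hV
  set κ : ℝ := (((N⁻¹ - N⁻¹ / 2)⁻¹ : NNReal) : ℝ) with hκ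
  refine ⟨ε, hε, max (k * max 1 (K : ℝ)) κ, ?_⟩
  intro x hx y hy
  have hxw : G x ∈ s ∩ t := hball hx
  have hyw : G y ∈ s ∩ t := hball hy
  have hGd : dist (G y) (G x) ≤ max 1 (K : ℝ) * dist y x := by
    rw [Prod.dist_eq]
    refine max_le ?_ ?_
    · exact le_mul_of_one_le_left dist_nonneg (le_max_left _ _)
    · exact (hP.dist_le_mul y x).trans
        (mul_le_mul_of_nonneg_right (le_max_right _ _) dist_nonneg)
  have hknonneg : (0:ℝ) ≤ k := k.coe_nonneg
  have hκnonneg : (0:ℝ) ≤ κ := NNReal.coe_nonneg _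
  refine ⟨le_max_of_le_right hκnonneg, ?_, ?_⟩
  · calc dist (S (G y)) (S (G x)) ≤ k * dist (G y) (G x) :=
          hlipS.dist_le_mul _ hyw.2 _ hxw.2
      _ ≤ k * (max 1 (K:ℝ) * dist y x) := by
          exact mul_le_mul_of_nonneg_left hGd hknonneg
      _ = k * max 1 (K:ℝ) * dist y x := by ring
      _ ≤ max (k * max 1 (K : ℝ)) κ * dist y x :=
          mul_le_mul_of_nonneg_right (le_max_left _ _) dist_nonneg
  · have h1 : dist y x ≤ dist (G y) (G x) := by
      rw [Prod.dist_eq]; exact le_max_left _ _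
    have h2 := hanti.le_mul_dist ⟨G y, hyw.1⟩ ⟨G x, hxw.1⟩
    simp only [Set.restrict_apply, Subtype.dist_eq] at h2
    calc dist y x ≤ dist (G y) (G x) := h1
      _ ≤ κ * dist (S (G y)) (S (G x)) := h2
      _ ≤ max (k * max 1 (K : ℝ)) κ * dist (S (G y)) (S (G x)) :=
          mul_le_mul_of_nonneg_right (le_max_right _ _) dist_nonneg

/-- if `S` is a lift of a cylinder diffeomorphism leaving invariant
the graph `Γ` of a 1-periodic Lipschitz function `P`, then
`φ(x) = π₁(S(x, P(x)))` is an increasing bi-Lipschitz homeomorphism of `ℝ`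
commuting with the unit translation, `S(x,P(x)) = (φ(x), P(φ(x)))`, and all the
difference quotients of `φ` lie between the positive constants
`essinf φ'` and `esssup φ'`. -/
theorem invariant_curve_circle_homeomorphism
    (S : ℝ × ℝ → ℝ × ℝ) (hS : ContDiff ℝ 2 S) (hinj : Function.Injective S)
    (hdet : ∀ p : ℝ × ℝ, (fderiv ℝ S p).det ≠ 0)
    (hlift : ∀ x y : ℝ, S (x + 1, y) = ((S (x, y)).1 + 1, (S (x, y)).2))
    (P : ℝ → ℝ) (K : NNReal) (hP : LipschitzWith K P)
    (hPper : ∀ x, P (x + 1) = P x)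
    (hGamma : S '' (Set.range fun x : ℝ => (x, P x)) = Set.range fun x : ℝ => (x, P x))
    (φ : ℝ → ℝ) (hφ : ∀ x, φ x = (S (x, P x)).1) :
    StrictMono φ ∧ Function.Bijective φ ∧
    (∃ L : NNReal, 0 < L ∧ LipschitzWith L φ ∧ AntilipschitzWith L φ) ∧
    (∀ x, φ (x + 1) = φ x + 1) ∧
    (∀ x, S (x, P x) = (φ x, P (φ x))) ∧
    0 < essInf (deriv φ) volume ∧
    (∀ x xs : ℝ, x ≠ xs →
      essInf (deriv φ) volume ≤ (φ x - φ xs) / (x - xs) ∧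
      (φ x - φ xs) / (x - xs) ≤ essSup (deriv φ) volume) := by
  -- the graph property
  have hgraph : ∀ x, S (x, P x) = (φ x, P (φ x)) := by
    intro x
    have hmem : S (x, P x) ∈ S '' (Set.range fun x : ℝ => (x, P x)) :=
      ⟨(x, P x), ⟨x, rfl⟩, rfl⟩
    rw [hGamma] at hmem
    obtain ⟨x', hx'⟩ := hmem
    have h1 : φ x = x' := by rw [hφ, ← hx']
    rw [← hx', h1]
  -- periodicity
  have hper : ∀ x, φ (x + 1) = φ x + 1 := by
    intro x
    rw [hφ, hφ, hPper, hlift]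
  have hint : ∀ (n : ℤ) (x : ℝ), φ (x + n) = φ x + n := by
    have hperiodic : Function.Periodic (fun x => φ x - x) 1 := by
      intro x; simp only [hper x]; ring
    intro n x
    have := (hperiodic.int_mul n) x
    simp only [mul_one] at this
    have h1 : φ (x + n) - (x + n) = φ x - x := this
    linarith
  -- injectivity of φ
  have hinjφ : Function.Injective φ := by
    intro x y hxy
    have h1 : S (x, P x) = S (y, P y) := by rw [hgraph, hgraph, hxy]
    have h2 := hinj h1
    exact congrArg Prod.fst h2
  -- continuity
  have hcont : Continuous φ := by
    have : Continuous fun x : ℝ => (S (x, P x)).1 :=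
      (hS.continuous.comp (continuous_id.prodMk hP.continuous)).fst
    simpa [funext hφ] using this
  -- strict monotonicity
  have hsm : StrictMono φ := by
    rcases hcont.strictMono_of_inj hinjφ with h | h
    · exact h
    · exfalso
      have h1 : φ 1 < φ 0 := h (by norm_num)
      have h2 : φ (0 + 1) = φ 0 + 1 := hper 0
      rw [zero_add] at h2
      linarith
  have hmono : Monotone φ := hsm.monotone
  -- surjectivity
  have hsurj : Function.Surjective φ := by
    apply hcont.surjective
    · apply Filter.tendsto_atTop_mono (fun x : ℝ => ?_)
        (Filter.tendsto_atTop_add_const_right Filter.atTop (φ 0 - 1) Filter.tendsto_id)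
      have h1 : φ ((0:ℝ) + (⌊x⌋ : ℤ)) = φ 0 + ⌊x⌋ := hint ⌊x⌋ 0
      have h2 : φ ((⌊x⌋ : ℝ)) ≤ φ x := hmono (Int.floor_le x)
      rw [zero_add] at h1
      have h3 : (x : ℝ) - 1 < (⌊x⌋ : ℝ) := Int.sub_one_lt_floor x
      simp only [Filter.tendsto_id, id]
      linarith
    · apply Filter.tendsto_atBot_mono (fun x : ℝ => ?_)
        (Filter.tendsto_atBot_add_const_right Filter.atBot (φ 0 + 1) Filter.tendsto_id)
      have h1 : φ ((0:ℝ) + (⌈x⌉ : ℤ)) = φ 0 + ⌈x⌉ := hint ⌈x⌉ 0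
      have h2 : φ x ≤ φ ((⌈x⌉ : ℝ)) := hmono (Int.le_ceil x)
      rw [zero_add] at h1
      have h3 : (⌈x⌉ : ℝ) < x + 1 := Int.ceil_lt_add_one x
      simp only [id]
      linarith
  -- uniform local bi-estimate
  obtain ⟨δ, hδ, c0, hc0⟩ := unif_rel
    (fun c x y => 0 ≤ c ∧ dist (S (y, P y)) (S (x, P x)) ≤ c * dist y x ∧
      dist y x ≤ c * dist (S (y, P y)) (S (x, P x)))
    (by
      rintro c c' x y hcc' ⟨h0, h1, h2⟩
      exact ⟨h0.trans hcc', h1.trans (mul_le_mul_of_nonneg_right hcc' dist_nonneg),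
        h2.trans (mul_le_mul_of_nonneg_right hcc' dist_nonneg)⟩)
    (local_biest S hS hdet P K hP)
  -- the combined real constant
  set cc : ℝ := max (c0 * max 1 (K : ℝ)) 1 with hcc
  have hcc1 : (1:ℝ) ≤ cc := le_max_right _ _
  have hccpos : (0:ℝ) < cc := lt_of_lt_of_le one_pos hcc1
  -- local estimates for φ
  have hlocboth : ∀ x ∈ Set.Ico (0:ℝ) 1, ∀ y : ℝ, x ≤ y → y ≤ x + δ →
      (φ y - φ x ≤ cc * (y - x) ∧ y - x ≤ cc * (φ y - φ x)) := by
    intro x hx y hxy hyd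
    obtain ⟨h0, h1, h2⟩ := hc0 x hx y hxy hyd
    have hdyx : dist y x = y - x := by rw [Real.dist_eq, abs_of_nonneg (by linarith)]
    have hdφ : dist (φ y) (φ x) = φ y - φ x := by
      rw [Real.dist_eq, abs_of_nonneg (sub_nonneg.2 (hmono hxy))]
    have hfst : dist (φ y) (φ x) ≤ dist (S (y, P y)) (S (x, P x)) := by
      rw [hφ y, hφ x, Prod.dist_eq]
      exact le_max_left _ _
    have hSd : dist (S (y, P y)) (S (x, P x)) ≤ max 1 (K:ℝ) * dist (φ y) (φ x) := by
      rw [hgraph y, hgraph x, Prod.dist_eq]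
      refine max_le (le_mul_of_one_le_left dist_nonneg (le_max_left _ _)) ?_
      exact (hP.dist_le_mul _ _).trans
        (mul_le_mul_of_nonneg_right (le_max_right _ _) dist_nonneg)
    constructor
    · have : φ y - φ x ≤ c0 * (y - x) := by
        rw [← hdφ, ← hdyx]; exact hfst.trans h1
      have hc0cc : c0 ≤ cc := by
        have h1K : (1:ℝ) ≤ max 1 (K:ℝ) := le_max_left _ _
        nlinarith [le_max_left (c0 * max 1 (K:ℝ)) (1:ℝ)]
      nlinarith
    · have h3 : y - x ≤ c0 * (max 1 (K:ℝ) * (φ y - φ x)) := by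
        rw [← hdyx, ← hdφ]
        exact h2.trans (mul_le_mul_of_nonneg_left hSd h0)
      have h4 : c0 * max 1 (K:ℝ) ≤ cc := le_max_left _ _
      have h5 : 0 ≤ φ y - φ x := sub_nonneg.2 (hmono hxy)
      nlinarith
  -- glue to global estimates
  have hlipest : ∀ x y : ℝ, x ≤ y → φ y - φ x ≤ cc * (y - x) := by
    refine glue_rel (fun x y => φ y - φ x ≤ cc * (y - x)) δ hδ ?_ ?_ ?_ ?_
    · intro x y z h1 h2; nlinarith
    · intro x; simp
    · intro n x y h
      rw [hint, hint]; ring_nf; ring_nf at h; linarith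
    · exact fun x y hx h1 h2 => (hlocboth x hx y h1 h2).1
  have hantiest : ∀ x y : ℝ, x ≤ y → y - x ≤ cc * (φ y - φ x) := by
    refine glue_rel (fun x y => y - x ≤ cc * (φ y - φ x)) δ hδ ?_ ?_ ?_ ?_
    · intro x y z h1 h2; nlinarith
    · intro x; simp
    · intro n x y h
      rw [hint, hint]; ring_nf; ring_nf at h; linarith
    · exact fun x y hx h1 h2 => (hlocboth x hx y h1 h2).2
  -- Lipschitz and antilipschitz
  have hlipφ : LipschitzWith cc.toNNReal φ := by
    apply LipschitzWith.of_dist_le_mul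
    intro x y
    rw [Real.coe_toNNReal _ hccpos.le]
    rcases le_total x y with h | h
    · rw [Real.dist_eq, Real.dist_eq, abs_of_nonpos (by linarith [hmono h] : φ x - φ y ≤ 0),
        abs_of_nonpos (by linarith)]
      have := hlipest x y h; linarith
    · rw [Real.dist_eq, Real.dist_eq, abs_of_nonneg (by linarith [hmono h] : 0 ≤ φ x - φ y),
        abs_of_nonneg (by linarith)]
      have := hlipest y x h; linarith
  have hantiφ : AntilipschitzWith cc.toNNReal φ := by
    apply AntilipschitzWith.of_le_mul_dist
    intro x y
    rw [Real.coe_toNNReal _ hccpos.le]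
    rcases le_total x y with h | h
    · rw [Real.dist_eq, Real.dist_eq, abs_of_nonpos (by linarith : x - y ≤ 0),
        abs_of_nonpos (by linarith [hmono h] : φ x - φ y ≤ 0)]
      have := hantiest x y h; linarith
    · rw [Real.dist_eq, Real.dist_eq, abs_of_nonneg (by linarith : 0 ≤ x - y),
        abs_of_nonneg (by linarith [hmono h] : 0 ≤ φ x - φ y)]
      have := hantiest y x h; linarith
  have hLpos : 0 < cc.toNNReal := Real.toNNReal_pos.2 hccpos
  refine ⟨hsm, ⟨hinjφ, hsurj⟩, ⟨cc.toNNReal, hLpos, hlipφ, hantiφ⟩, hper, hgraph, ?_⟩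
  -- Stieltjes measure of φ
  have hstq : ∀ x, hmono.stieltjesFunction x = φ x := by
    intro x
    rw [hmono.stieltjesFunction_eq]
    exact hmono.continuousWithinAt_Ioi_iff_rightLim_eq.1 hcont.continuousAt.continuousWithinAt
  set μφ := hmono.stieltjesFunction.measure with hμφ
  have hIoc : ∀ a b : ℝ, μφ (Set.Ioc a b) = ENNReal.ofReal (φ b - φ a) := by
    intro a b; rw [hμφ, StieltjesFunction.measure_Ioc, hstq, hstq]
  have hmono2 : Monotone (fun x : ℝ => cc * x - φ x) := by
    intro x y hxy
    have := hlipest x y hxy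
    simp only
    nlinarith
  have hcont2 : Continuous (fun x : ℝ => cc * x - φ x) :=
    (continuous_const.mul continuous_id).sub hcont
  have hstq2 : ∀ x, hmono2.stieltjesFunction x = cc * x - φ x := by
    intro x
    rw [hmono2.stieltjesFunction_eq]
    exact hmono2.continuousWithinAt_Ioi_iff_rightLim_eq.1 hcont2.continuousAt.continuousWithinAt
  haveI hlocfin : IsLocallyFiniteMeasure (μφ + hmono2.stieltjesFunction.measure) := by
    constructor
    intro x
    obtain ⟨s, hs, hsf⟩ := μφ.finiteAt_nhds x
    obtain ⟨t, ht, htf⟩ := (hmono2.stieltjesFunction.measure).finiteAt_nhds x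
    refine ⟨s ∩ t, Filter.inter_mem hs ht, ?_⟩
    rw [Measure.add_apply]
    exact ENNReal.add_lt_top.2 ⟨lt_of_le_of_lt (measure_mono Set.inter_subset_left) hsf,
      lt_of_le_of_lt (measure_mono Set.inter_subset_right) htf⟩
  have hsum : μφ + hmono2.stieltjesFunction.measure = (ENNReal.ofReal cc) • volume := by
    refine MeasureTheory.Measure.ext_of_Ioc _ _ (fun a b hab => ?_)
    have h1 : (0:ℝ) ≤ φ b - φ a := sub_nonneg.2 (hmono hab.le)
    have h2 : (0:ℝ) ≤ (cc * b - φ b) - (cc * a - φ a) := sub_nonneg.2 (hmono2 hab.le)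
    rw [Measure.add_apply, hIoc, StieltjesFunction.measure_Ioc, hstq2, hstq2, Measure.smul_apply,
      Real.volume_Ioc, smul_eq_mul, ← ENNReal.ofReal_mul hccpos.le, ← ENNReal.ofReal_add h1 h2]
    congr 1
    ring
  have habs : μφ ≪ volume := by
    refine Measure.absolutelyContinuous_of_le_smul (μ := volume) (c := ENNReal.ofReal cc) ?_
    rw [← hsum]
    exact Measure.le_add_right le_rfl
  have hFTC : ∀ a b : ℝ, μφ (Set.Ioc a b) =
      ∫⁻ x in Set.Ioc a b, μφ.rnDeriv volume x ∂volume := by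
    intro a b
    rw [← withDensity_apply _ measurableSet_Ioc, Measure.withDensity_rnDeriv_eq μφ volume habs]
  -- almost everywhere bounds on the derivative
  have hbound : ∀ᵐ x : ℝ, 1 / cc ≤ deriv φ x ∧ deriv φ x ≤ cc := by
    filter_upwards [hmono.ae_hasDerivAt] with x hx
    have hslope : Filter.Tendsto (slope φ x) (nhdsWithin x (Set.Ioi x)) (nhds (deriv φ x)) := by
      rw [hx.deriv]
      exact (hasDerivAt_iff_tendsto_slope.1 hx).mono_left
        (nhdsWithin_mono x fun y hy => ne_of_gt hy)
    constructor
    · refine ge_of_tendsto hslope ?_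
      filter_upwards [self_mem_nhdsWithin] with y hy
      have hy' : x < y := hy
      have h1 := hantiest x y hy'.le
      rw [slope_def_field, div_le_div_iff₀ hccpos (sub_pos.2 hy')]
      nlinarith
    · refine le_of_tendsto hslope ?_
      filter_upwards [self_mem_nhdsWithin] with y hy
      have hy' : x < y := hy
      have h1 := hlipest x y hy'.le
      rw [slope_def_field, div_le_iff₀ (sub_pos.2 hy')]
      nlinarith
  have hderiv_eq : ∀ᵐ x : ℝ, deriv φ x = (μφ.rnDeriv volume x).toReal := by
    filter_upwards [hmono.ae_hasDerivAt] with x hx using hx.deriv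
  have hvol : (volume : Measure ℝ) ≠ 0 := by
    intro h
    have := congrArg (fun μ : Measure ℝ => μ (Set.Ioc 0 1)) h
    simp [Real.volume_Ioc] at this
  haveI hneae : (ae (volume : Measure ℝ)).NeBot := ae_neBot.2 hvol
  have hBdd_below : Filter.IsBoundedUnder (· ≥ ·) (ae (volume : Measure ℝ)) (deriv φ) :=
    ⟨1 / cc, Filter.eventually_map.2 (hbound.mono fun x h => h.1)⟩
  have hBdd_above : Filter.IsBoundedUnder (· ≤ ·) (ae (volume : Measure ℝ)) (deriv φ) :=
    ⟨cc, Filter.eventually_map.2 (hbound.mono fun x h => h.2)⟩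
  set m := essInf (deriv φ) volume with hm
  set M := essSup (deriv φ) volume with hM
  have hm_ge : 1 / cc ≤ m := by
    have h1 : 1 / cc ≤ Filter.liminf (deriv φ) (ae (volume : Measure ℝ)) :=
      Filter.le_liminf_of_le hBdd_above.isCoboundedUnder_ge (hbound.mono fun x h => h.1)
    exact h1
  have hm_pos : 0 < m := lt_of_lt_of_le (by positivity) hm_ge
  have hae_m : ∀ᵐ x : ℝ, m ≤ deriv φ x := ae_essInf_le hBdd_below
  have hae_M : ∀ᵐ x : ℝ, deriv φ x ≤ M := ae_le_essSup hBdd_above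
  have hM_nonneg : (0:ℝ) ≤ M := by
    obtain ⟨x, h1, h2⟩ := (hae_m.and hae_M).exists
    linarith
  have hrd_lt_top := Measure.rnDeriv_lt_top μφ volume
  have hlower : ∀ᵐ x : ℝ, ENNReal.ofReal m ≤ μφ.rnDeriv volume x := by
    filter_upwards [hae_m, hderiv_eq] with x h1 h2
    exact ENNReal.ofReal_le_of_le_toReal (by rw [← h2]; exact h1)
  have hupper : ∀ᵐ x : ℝ, μφ.rnDeriv volume x ≤ ENNReal.ofReal M := by
    filter_upwards [hae_M, hderiv_eq, hrd_lt_top] with x h1 h2 h3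
    exact (ENNReal.le_ofReal_iff_toReal_le h3.ne hM_nonneg).2 (by rw [← h2]; exact h1)
  have hkey : ∀ a b : ℝ, a ≤ b → m * (b - a) ≤ φ b - φ a ∧ φ b - φ a ≤ M * (b - a) := by
    intro a b hab
    have hba : (0:ℝ) ≤ b - a := by linarith
    have hIab := (hFTC a b).symm.trans (hIoc a b)
    constructor
    · have h1 : ENNReal.ofReal m * volume (Set.Ioc a b) ≤
          ∫⁻ x in Set.Ioc a b, μφ.rnDeriv volume x ∂volume := by
        rw [← MeasureTheory.setLIntegral_const]
        exact lintegral_mono_ae (ae_restrict_of_ae hlower)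
      rw [hIab, Real.volume_Ioc, ← ENNReal.ofReal_mul hm_pos.le] at h1
      have h2 := (ENNReal.ofReal_le_ofReal_iff (sub_nonneg.2 (hmono hab))).1 h1
      linarith
    · have h1 : (∫⁻ x in Set.Ioc a b, μφ.rnDeriv volume x ∂volume) ≤
          ENNReal.ofReal M * volume (Set.Ioc a b) := by
        rw [← MeasureTheory.setLIntegral_const]
        exact lintegral_mono_ae (ae_restrict_of_ae hupper)
      rw [hIab, Real.volume_Ioc, ← ENNReal.ofReal_mul hM_nonneg] at h1
      have h2 := (ENNReal.ofReal_le_ofReal_iff (by positivity)).1 h1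
      linarith
  refine ⟨hm_pos, ?_⟩
  intro x xs hne
  rcases lt_or_gt_of_ne hne with h | h
  · have hq : (φ x - φ xs) / (x - xs) = (φ xs - φ x) / (xs - x) := by
      rw [← neg_sub (φ xs) (φ x), ← neg_sub xs x, neg_div_neg_eq]
    rw [hq]
    obtain ⟨hk1, hk2⟩ := hkey x xs h.le
    have hpos : (0:ℝ) < xs - x := by linarith
    constructor
    · rw [le_div_iff₀ hpos]; nlinarith
    · rw [div_le_iff₀ hpos]; nlinarith
  · obtain ⟨hk1, hk2⟩ := hkey xs x h.le
    have hpos : (0:ℝ) < x - xs := by linarith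
    constructor
    · rw [le_div_iff₀ hpos]; nlinarith
    · rw [div_le_iff₀ hpos]; nlinarith
end

section
/- Let h : ℝ² → ℝ be of class C² with h(x+1, x̄+1) = h(x, x̄) and h₁₂(x, x̄) < 0 for all (x, x̄) ∈ ℝ². Let φ : ℝ → ℝ be an increasing bi-Lipschitz homeomorphism with φ(x+1) = φ(x) + 1 satisfying h₂(φ⁻¹(x), x) + h₁(x, φ(x)) = 0 for all x ∈ ℝ. Define a(x) = h₂₂(φ⁻¹(x), x) + h₁₁(x, φ(x)) and b(x) = −h₁₂(φ⁻¹(x), x). Then for almost every x ∈ ℝ, a(x) = b(φ(x))·φ'(x) + b(x)/φ'(φ⁻¹(x)). -/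
open MeasureTheory

/-- Partial derivative of `h` with respect to its first argument. -/
noncomputable def h1 (h : ℝ → ℝ → ℝ) (x y : ℝ) : ℝ := deriv (fun u => h u y) x

/-- Partial derivative of `h` with respect to its second argument. -/
noncomputable def h2 (h : ℝ → ℝ → ℝ) (x y : ℝ) : ℝ := deriv (fun v => h x v) y

/-- Second partial derivative of `h` with respect to its first argument, twice. -/
noncomputable def h11 (h : ℝ → ℝ → ℝ) (x y : ℝ) : ℝ := deriv (fun u => h1 h u y) x

/-- Mixed second partial derivative of `h`. -/
noncomputable def h12 (h : ℝ → ℝ → ℝ) (x y : ℝ) : ℝ := deriv (fun v => h1 h x v) y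

/-- Second partial derivative of `h` with respect to its second argument, twice. -/
noncomputable def h22 (h : ℝ → ℝ → ℝ) (x y : ℝ) : ℝ := deriv (fun v => h2 h x v) y
/-!
At a point `x` where `ψ` and `φ` are differentiable and `φ` is differentiable at `ψ x`,
differentiate the Euler–Lagrange identity `h₂(ψ t, t) + h₁(t, φ t) = 0` at `t = x` by the chain
rule along the curves `t ↦ (ψ t, t)` and `t ↦ (t, φ t)`; together with `ψ'(x) = 1 / φ'(ψ x)` and
the symmetry `h₁₂ = h₂₁` this is the claimed identity. Almost every `x` is such a point: `φ` and
`ψ` are Lipschitz, hence differentiable a.e., and the Lipschitz map `φ` sends the null set where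
`φ` is not differentiable to a null set, which contains every `x` with `φ` not differentiable at
`ψ x`.
-/

open Function

theorem hasDerivAt_fderiv_apply_comp {E F : Type*} [NormedAddCommGroup E] [NormedSpace ℝ E]
    [NormedAddCommGroup F] [NormedSpace ℝ F] {f : E → F} (hf : ContDiff ℝ 2 f)
    {γ : ℝ → E} {γ' : E} {t : ℝ} (hγ : HasDerivAt γ γ' t) (v : E) :
    HasDerivAt (fun s => fderiv ℝ f (γ s) v) (fderiv ℝ (fderiv ℝ f) (γ t) γ' v) t :=
  ((ContinuousLinearMap.apply ℝ F v).hasFDerivAt.comp (γ t)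
    ((hf.fderiv_right le_rfl).differentiable one_ne_zero (γ t)).hasFDerivAt).comp_hasDerivAt
    t hγ

section PartialDerivatives

variable {h : ℝ → ℝ → ℝ}

theorem h1_eq_fderiv (hh : Differentiable ℝ (uncurry h)) (x y : ℝ) :
    h1 h x y = fderiv ℝ (uncurry h) (x, y) (1, 0) :=
  ((hh (x, y)).hasFDerivAt.comp_hasDerivAt (f := fun u : ℝ => (u, y)) x
    ((hasDerivAt_id x).prodMk (hasDerivAt_const x y))).deriv

theorem h2_eq_fderiv (hh : Differentiable ℝ (uncurry h)) (x y : ℝ) :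
    h2 h x y = fderiv ℝ (uncurry h) (x, y) (0, 1) :=
  ((hh (x, y)).hasFDerivAt.comp_hasDerivAt (f := fun v : ℝ => (x, v)) y
    ((hasDerivAt_const y x).prodMk (hasDerivAt_id y))).deriv

theorem h11_eq_fderiv_fderiv (hh : ContDiff ℝ 2 (uncurry h)) (x y : ℝ) :
    h11 h x y = fderiv ℝ (fderiv ℝ (uncurry h)) (x, y) (1, 0) (1, 0) := by
  simp only [h11, h1_eq_fderiv (hh.differentiable two_ne_zero)]
  exact (hasDerivAt_fderiv_apply_comp hh ((hasDerivAt_id x).prodMk (hasDerivAt_const x y))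
    _).deriv

theorem h12_eq_fderiv_fderiv (hh : ContDiff ℝ 2 (uncurry h)) (x y : ℝ) :
    h12 h x y = fderiv ℝ (fderiv ℝ (uncurry h)) (x, y) (0, 1) (1, 0) := by
  simp only [h12, h1_eq_fderiv (hh.differentiable two_ne_zero)]
  exact (hasDerivAt_fderiv_apply_comp hh ((hasDerivAt_const y x).prodMk (hasDerivAt_id y))
    _).deriv

theorem h12_eq_fderiv_fderiv_swap (hh : ContDiff ℝ 2 (uncurry h)) (x y : ℝ) :
    h12 h x y = fderiv ℝ (fderiv ℝ (uncurry h)) (x, y) (1, 0) (0, 1) := by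
  rw [h12_eq_fderiv_fderiv hh, hh.contDiffAt.isSymmSndFDerivAt (by simp)]

theorem h22_eq_fderiv_fderiv (hh : ContDiff ℝ 2 (uncurry h)) (x y : ℝ) :
    h22 h x y = fderiv ℝ (fderiv ℝ (uncurry h)) (x, y) (0, 1) (0, 1) := by
  simp only [h22, h2_eq_fderiv (hh.differentiable two_ne_zero)]
  exact (hasDerivAt_fderiv_apply_comp hh ((hasDerivAt_const y x).prodMk (hasDerivAt_id y))
    _).deriv

variable {u v : ℝ → ℝ} {u' v' t : ℝ}

theorem hasDerivAt_fderiv_apply_prodMk (hh : ContDiff ℝ 2 (uncurry h))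
    (hu : HasDerivAt u u' t) (hv : HasDerivAt v v' t) (w : ℝ × ℝ) :
    HasDerivAt (fun s => fderiv ℝ (uncurry h) (u s, v s) w)
      (u' * fderiv ℝ (fderiv ℝ (uncurry h)) (u t, v t) (1, 0) w
        + v' * fderiv ℝ (fderiv ℝ (uncurry h)) (u t, v t) (0, 1) w) t := by
  have hdir : ((u', v') : ℝ × ℝ) = u' • ((1 : ℝ), (0 : ℝ)) + v' • ((0 : ℝ), (1 : ℝ)) := by
    simp
  refine (hasDerivAt_fderiv_apply_comp hh (hu.prodMk hv) w).congr_deriv ?_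
  rw [hdir, map_add, map_smul, map_smul]
  simp only [add_apply, smul_apply, smul_eq_mul]

theorem hasDerivAt_h1_comp (hh : ContDiff ℝ 2 (uncurry h))
    (hu : HasDerivAt u u' t) (hv : HasDerivAt v v' t) :
    HasDerivAt (fun s => h1 h (u s) (v s))
      (u' * h11 h (u t) (v t) + v' * h12 h (u t) (v t)) t := by
  simp only [h1_eq_fderiv (hh.differentiable two_ne_zero), h11_eq_fderiv_fderiv hh,
    h12_eq_fderiv_fderiv hh]
  exact hasDerivAt_fderiv_apply_prodMk hh hu hv _

theorem hasDerivAt_h2_comp (hh : ContDiff ℝ 2 (uncurry h))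
    (hu : HasDerivAt u u' t) (hv : HasDerivAt v v' t) :
    HasDerivAt (fun s => h2 h (u s) (v s))
      (u' * h12 h (u t) (v t) + v' * h22 h (u t) (v t)) t := by
  simp only [h2_eq_fderiv (hh.differentiable two_ne_zero), h12_eq_fderiv_fderiv_swap hh,
    h22_eq_fderiv_fderiv hh]
  exact hasDerivAt_fderiv_apply_prodMk hh hu hv _

end PartialDerivatives

theorem LipschitzWith.ae_comp_of_rightInverse {K : NNReal} {φ ψ : ℝ → ℝ} (hφ : LipschitzWith K φ)
    (hψ : RightInverse ψ φ) {p : ℝ → Prop} (hp : ∀ᵐ x, p x) : ∀ᵐ y, p (ψ y) := by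
  have himage : volume (φ '' {x | ¬ p x}) = 0 := by
    have := hφ.hausdorffMeasure_image_le zero_le_one {x | ¬ p x}
    rw [hausdorffMeasure_real, ae_iff.mp hp] at this
    simpa using this
  refine ae_iff.mpr (measure_mono_null (fun y hy => ?_) himage)
  exact ⟨ψ y, hy, hψ y⟩

theorem deriv_eq_inv_of_rightInverse {φ ψ : ℝ → ℝ} (hψ : RightInverse ψ φ) {x : ℝ}
    (hφx : DifferentiableAt ℝ φ (ψ x)) (hψx : DifferentiableAt ℝ ψ x) :
    deriv ψ x = (deriv φ (ψ x))⁻¹ := by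
  have hcomp : HasDerivAt (φ ∘ ψ) (deriv φ (ψ x) * deriv ψ x) x :=
    hφx.hasDerivAt.comp x hψx.hasDerivAt
  rw [hψ.comp_eq_id] at hcomp
  exact eq_inv_of_mul_eq_one_right (hcomp.unique (hasDerivAt_id x))

theorem differentiated_euler_lagrange_general (h : ℝ → ℝ → ℝ)
    (hC2 : ContDiff ℝ 2 (fun p : ℝ × ℝ => h p.1 p.2))
    (φ ψ : ℝ → ℝ) (K : NNReal)
    (hlip : LipschitzWith K φ) (halip : AntilipschitzWith K φ)
    (hlinv : Function.LeftInverse ψ φ) (hrinv : Function.RightInverse ψ φ)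
    (hEL : ∀ x, h2 h (ψ x) x + h1 h x (φ x) = 0)
    (a b : ℝ → ℝ)
    (ha : ∀ x, a x = h22 h (ψ x) x + h11 h x (φ x))
    (hb : ∀ x, b x = -h12 h (ψ x) x) :
    ∀ᵐ x : ℝ, a x = b (φ x) * deriv φ x + b x / deriv φ (ψ x) := by
  have hφ := hlip.ae_differentiableAt_real
  filter_upwards [hφ, (halip.to_rightInverse hrinv).ae_differentiableAt_real,
    hlip.ae_comp_of_rightInverse hrinv hφ] with x hφx hψx hφψx
  have hEL_const : HasDerivAt (fun t => h2 h (ψ t) t + h1 h t (φ t)) 0 x := by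
    simpa only [hEL] using hasDerivAt_const x (0 : ℝ)
  have hEL_chain := (hasDerivAt_h2_comp hC2 hψx.hasDerivAt (hasDerivAt_id' x)).add
    (hasDerivAt_h1_comp hC2 (hasDerivAt_id' x) hφx.hasDerivAt)
  have hEL_diff := hEL_chain.unique hEL_const
  rw [deriv_eq_inv_of_rightInverse hrinv hφψx hψx] at hEL_diff
  rw [ha, hb, hb, hlinv x, div_eq_mul_inv]
  linarith

/-- the differentiated Euler–Lagrange equation
`a(x) = b(φ(x))·φ'(x) + b(x)/φ'(φ⁻¹(x))` holds for almost every `x`. -/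
theorem differentiated_euler_lagrange (h : ℝ → ℝ → ℝ)
    (hC2 : ContDiff ℝ 2 (fun p : ℝ × ℝ => h p.1 p.2))
    (hper : ∀ x y, h (x + 1) (y + 1) = h x y)
    (htwist : ∀ x y, h12 h x y < 0)
    (φ ψ : ℝ → ℝ) (hmono : StrictMono φ) (K : NNReal)
    (hlip : LipschitzWith K φ) (halip : AntilipschitzWith K φ)
    (hlinv : Function.LeftInverse ψ φ) (hrinv : Function.RightInverse ψ φ)
    (hcomm : ∀ x, φ (x + 1) = φ x + 1)
    (hEL : ∀ x, h2 h (ψ x) x + h1 h x (φ x) = 0)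
    (a b : ℝ → ℝ)
    (ha : ∀ x, a x = h22 h (ψ x) x + h11 h x (φ x))
    (hb : ∀ x, b x = -h12 h (ψ x) x) :
    ∀ᵐ x : ℝ, a x = b (φ x) * deriv φ x + b x / deriv φ (ψ x) :=
  differentiated_euler_lagrange_general h hC2 φ ψ K hlip halip hlinv hrinv hEL a b ha hb
end

section
/- Let B, C > 0 with B² − 4C > 0, and let (d_n)_{n∈ℤ} be a bi-infinite sequence of strictly positive real numbers satisfying d_n ≤ B − C/d_{n−1} for every n ∈ ℤ. Then d_n ≤ D⁺ = (B + √(B² − 4C))/2 for every n ∈ ℤ. -/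
/-- if `B, C > 0`, `B² − 4C > 0` and `(d_n)_{n∈ℤ}` is a bi-infinite
sequence of positive reals with `d_n ≤ B − C/d_{n−1}` for all `n`, then
`d_n ≤ D⁺ = (B + √(B² − 4C))/2` for all `n`. -/
theorem continued_fraction_upper_bound (B C : ℝ) (hB : 0 < B) (hC : 0 < C)
    (hdisc : B ^ 2 - 4 * C > 0) (d : ℤ → ℝ) (hpos : ∀ n, 0 < d n)
    (hrec : ∀ n : ℤ, d n ≤ B - C / d (n - 1)) :
    ∀ n : ℤ, d n ≤ (B + Real.sqrt (B ^ 2 - 4 * C)) / 2 := by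
  intro n
  by_contra h
  push_neg at h
  set s := Real.sqrt (B ^ 2 - 4 * C) with hs
  have hs0 : 0 < s := Real.sqrt_pos.mpr hdisc
  have hs2 : s ^ 2 = B ^ 2 - 4 * C := Real.sq_sqrt hdisc.le
  have hsB : s < B := by nlinarith
  set D := (B + s) / 2 with hD
  set E := (B - s) / 2 with hE
  have hE0 : 0 < E := by rw [hE]; linarith
  have hD0 : 0 < D := by rw [hD]; linarith
  have hED : E < D := by rw [hD, hE]; linarith
  have hDE : D * E = C := by rw [hD, hE]; nlinarith
  have hBD : B - D = E := by rw [hD, hE]; ring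
  have hdB : ∀ m : ℤ, d m < B := by
    intro m
    have := div_pos hC (hpos (m - 1))
    have := hrec m
    linarith
  have hq1 : 1 < D / E := (one_lt_div hE0).mpr hED
  have hq0 : 0 < D / E := by linarith
  -- key single-step bound
  have key : ∀ m : ℤ, D < d m → D + (D / E) * (d m - D) ≤ d (m - 1) := by
    intro m hm
    have h1 : C / d (m - 1) ≤ B - d m := by linarith [hrec m]
    have h2 : 0 < B - d m := lt_of_lt_of_le (div_pos hC (hpos (m - 1))) h1
    have h1' : C ≤ (B - d m) * d (m - 1) := (div_le_iff₀ (hpos (m - 1))).mp h1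
    have h3 : C / (B - d m) ≤ d (m - 1) := by
      rw [div_le_iff₀ h2]
      linarith [h1']
    have hlt : B - d m < E := by linarith [hBD]
    have hqE : D / E * E = D := div_mul_cancel₀ D hE0.ne'
    have h4 : D + (D / E) * (d m - D) ≤ C / (B - d m) := by
      rw [le_div_iff₀ h2]
      nlinarith [mul_nonneg (mul_nonneg hq0.le (by linarith : (0:ℝ) ≤ d m - D))
        (by linarith : (0:ℝ) ≤ E - (B - d m)), hqE, hDE]
    linarith
  -- geometric growth going backwards
  have grow : ∀ k : ℕ, D + (D / E) ^ k * (d n - D) ≤ d (n - k) := by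
    intro k
    induction k with
    | zero => simpa using le_of_eq rfl
    | succ k ih =>
      have hpos' : 0 < (D / E) ^ k * (d n - D) := by
        apply mul_pos (pow_pos hq0 k)
        linarith
      have hm : D < d (n - k) := by linarith
      have := key (n - k) hm
      have hstep : D + (D / E) * ((D / E) ^ k * (d n - D)) ≤ D + (D / E) * (d (n - k) - D) := by
        have : (D / E) ^ k * (d n - D) ≤ d (n - k) - D := by linarith
        nlinarith
      have hidx : n - (↑(k + 1) : ℤ) = (n - k) - 1 := by push_cast; ring
      rw [hidx]
      calc D + (D / E) ^ (k + 1) * (d n - D)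
          = D + (D / E) * ((D / E) ^ k * (d n - D)) := by ring
        _ ≤ D + (D / E) * (d (n - k) - D) := hstep
        _ ≤ d ((n - k) - 1) := key (n - k) hm
  -- contradiction with boundedness
  have hε : 0 < d n - D := by linarith
  obtain ⟨k, hk⟩ := pow_unbounded_of_one_lt (E / (d n - D)) hq1
  have h5 : E < (D / E) ^ k * (d n - D) := by
    rw [div_lt_iff₀ hε] at hk
    linarith
  have h6 := grow k
  have h7 := hdB (n - k)
  linarith [hBD]
end

section
/- Let B, C > 0 with B² − 4C > 0, and let (d_n)_{n∈ℤ} be a bi-infinite sequence of strictly positive real numbers satisfying d_n · (B − C·d_{n+1}) ≥ 1 for every n ∈ ℤ. Then d_n ≥ D⁻ = (B − √(B² − 4C))/(2C) for every n ∈ ℤ. -/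
/-- if `B, C > 0`, `B² − 4C > 0` and `(d_n)_{n∈ℤ}` is a bi-infinite
sequence of positive reals with `d_n·(B − C·d_{n+1}) ≥ 1` for all `n`, then
`d_n ≥ D⁻ = (B − √(B² − 4C))/(2C)` for all `n`. -/
theorem continued_fraction_lower_bound (B C : ℝ) (hB : 0 < B) (hC : 0 < C)
    (hdisc : B ^ 2 - 4 * C > 0) (d : ℤ → ℝ) (hpos : ∀ n, 0 < d n)
    (hrec : ∀ n : ℤ, 1 ≤ d n * (B - C * d (n + 1))) :
    ∀ n : ℤ, (B - Real.sqrt (B ^ 2 - 4 * C)) / (2 * C) ≤ d n := by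
  set s := Real.sqrt (B ^ 2 - 4 * C) with hs
  have hs2 : s ^ 2 = B ^ 2 - 4 * C := Real.sq_sqrt hdisc.le
  have hs0 : 0 ≤ s := Real.sqrt_nonneg _
  -- for each n, B - C * d (n+1) > 0
  have hBpos : ∀ n : ℤ, 0 < B - C * d (n + 1) := by
    intro n
    by_contra h
    push_neg at h
    have := hrec n
    nlinarith [hpos n]
  -- hence every d n < B / C
  have hub : ∀ n : ℤ, 0 < B - C * d n := by
    intro n
    have h := hBpos (n - 1)
    have e : n - 1 + 1 = n := by ring
    rwa [e] at h
  set m := sInf (Set.range d) with hm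
  have hbdd : BddBelow (Set.range d) := ⟨0, by rintro x ⟨n, rfl⟩; exact (hpos n).le⟩
  have hne : (Set.range d).Nonempty := ⟨d 0, 0, rfl⟩
  have hmle : ∀ n : ℤ, m ≤ d n := fun n => csInf_le hbdd ⟨n, rfl⟩
  have hm0 : 0 ≤ m := le_csInf hne (by rintro x ⟨n, rfl⟩; exact (hpos n).le)
  have hBm : 0 < B - C * m := by
    have h := hub 0
    have h2 := hmle 0
    nlinarith
  have hlow : ∀ n : ℤ, 1 / (B - C * m) ≤ d n := by
    intro n
    have h := hrec n
    have h2 := hmle (n + 1)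
    have h3 : 1 ≤ d n * (B - C * m) := by
      nlinarith [mul_nonneg (hpos n).le (mul_nonneg hC.le (sub_nonneg.2 h2))]
    rw [div_le_iff₀ hBm]
    linarith [h3]
  have hkey : 1 / (B - C * m) ≤ m :=
    le_csInf hne (by rintro x ⟨n, rfl⟩; exact hlow n)
  have hquad : 1 ≤ m * (B - C * m) := by
    rw [div_le_iff₀ hBm] at hkey
    linarith
  intro n
  have : (B - s) / (2 * C) ≤ m := by
    rw [div_le_iff₀ (by positivity)]
    nlinarith [hquad, hs2, hs0, hm0]
  exact this.trans (hmle n)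
end
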